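/- arXiv:2403.09342 — 3 statements merged into one kernel-verified Lean document; each statement's English description precedes it below -/
import Mathlib

section
/- Let d ≥ 2 and let A be a positive semidefinite symmetric real (d²−1)×(d²−1) matrix with eigenvalues ζ₁ ≥ ζ₂ ≥ … ≥ ζ_{d²−1} ≥ 0 listed in decreasing order with algebraic multiplicities. Then the maximum over all simplex frames Ω_y in ℝ^{d²−1} of tr[A·Π_{Ω_y}], where Π_{Ω_y} = ((d−1)/d)Σ_{k=1}^{d} y_k y_kᵀ, is attained and equals ζ₁ + ζ₂ + … + ζ_{d−1}. -/
open Matrix Finset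
open scoped Kronecker ComplexOrder

noncomputable section

/-- A quantum state: a positive semidefinite (hence Hermitian) matrix of trace 1. -/
def IsState {n : Type*} [Fintype n] (ρ : Matrix n n ℂ) : Prop :=
  ρ.PosSemidef ∧ ρ.trace = 1

/-- The pure state (rank-one projection) associated with a vector `ψ`. -/
def pureState {n : Type*} (ψ : n → ℂ) : Matrix n n ℂ :=
  Matrix.vecMulVec ψ (star ψ)

/-- A Bloch basis for `d × d` complex matrices: a family of nonzero traceless Hermitian
matrices with `tr[Υ k * Υ m] = 2 δ_{km}`. -/
def IsBlochBasis (d : ℕ) (Υ : Fin (d ^ 2 - 1) → Matrix (Fin d) (Fin d) ℂ) : Prop :=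
  (∀ k, Υ k ≠ 0) ∧ (∀ k, (Υ k).IsHermitian) ∧ (∀ k, (Υ k).trace = 0) ∧
    (∀ k m, (Υ k * Υ m).trace = if k = m then 2 else 0)

/-- The Bloch vector of a state `ρ` on `ℂ^d` relative to a Bloch basis `Υ`. -/
def blochVector {d : ℕ} (ρ : Matrix (Fin d) (Fin d) ℂ)
    (Υ : Fin (d ^ 2 - 1) → Matrix (Fin d) (Fin d) ℂ) : Fin (d ^ 2 - 1) → ℝ :=
  fun k => Real.sqrt ((d : ℝ) / (2 * ((d : ℝ) - 1))) * ((ρ * Υ k).trace).re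

/-- Partial trace over the first tensor factor. -/
def ptrace1 {d₁ d₂ : ℕ} (ρ : Matrix (Fin d₁ × Fin d₂) (Fin d₁ × Fin d₂) ℂ) :
    Matrix (Fin d₂) (Fin d₂) ℂ :=
  Matrix.of fun j j' => ∑ i, ρ (i, j) (i, j')

/-- Partial trace over the second tensor factor. -/
def ptrace2 {d₁ d₂ : ℕ} (ρ : Matrix (Fin d₁ × Fin d₂) (Fin d₁ × Fin d₂) ℂ) :
    Matrix (Fin d₁) (Fin d₁) ℂ :=
  Matrix.of fun i i' => ∑ j, ρ (i, j) (i', j)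

/-- Partial transpose with respect to the second tensor factor. -/
def ptranspose2 {d₁ d₂ : ℕ} (ρ : Matrix (Fin d₁ × Fin d₂) (Fin d₁ × Fin d₂) ℂ) :
    Matrix (Fin d₁ × Fin d₂) (Fin d₁ × Fin d₂) ℂ :=
  Matrix.of fun p q => ρ (p.1, q.2) (q.1, p.2)

/-- The correlation matrix of a two-qudit state, `T^{ij} = tr[ρ (Υ₁ i ⊗ Υ₂ j)]`. -/
def corrMatrix {d₁ d₂ : ℕ} (ρ : Matrix (Fin d₁ × Fin d₂) (Fin d₁ × Fin d₂) ℂ)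
    (Υ₁ : Fin (d₁ ^ 2 - 1) → Matrix (Fin d₁) (Fin d₁) ℂ)
    (Υ₂ : Fin (d₂ ^ 2 - 1) → Matrix (Fin d₂) (Fin d₂) ℂ) :
    Matrix (Fin (d₁ ^ 2 - 1)) (Fin (d₂ ^ 2 - 1)) ℝ :=
  Matrix.of fun i j => ((ρ * (Υ₁ i ⊗ₖ Υ₂ j)).trace).re

/-- A quantum-classical state `χ = Σ_k α_k σ_k ⊗ |k⟩⟨k|`. -/
def IsQCState {d₁ d₂ : ℕ} (χ : Matrix (Fin d₁ × Fin d₂) (Fin d₁ × Fin d₂) ℂ) : Prop :=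
  ∃ (α : Fin d₂ → ℝ) (σ : Fin d₂ → Matrix (Fin d₁) (Fin d₁) ℂ) (e : Fin d₂ → Fin d₂ → ℂ),
    (∀ k, 0 ≤ α k) ∧ (∑ k, α k = 1) ∧ (∀ k, IsState (σ k)) ∧
    (∀ k l, ∑ i, star (e k i) * e l i = if k = l then (1 : ℂ) else 0) ∧
    χ = ∑ k, (α k : ℂ) • (σ k ⊗ₖ pureState (e k))

/-- The geometric quantum discord (with the Hilbert–Schmidt distance):
`D_g(ρ) = min over quantum-classical χ of tr[(ρ - χ)²]`. -/
def Dg {d₁ d₂ : ℕ} (ρ : Matrix (Fin d₁ × Fin d₂) (Fin d₁ × Fin d₂) ℂ) : ℝ :=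
  sInf {x : ℝ | ∃ χ, IsQCState χ ∧ x = (((ρ - χ) * (ρ - χ)).trace).re}

/-- `η` lists the eigenvalues of the real matrix `G` in decreasing order with algebraic
multiplicities: `η` is antitone and the characteristic polynomial of `G` splits as
`∏ (X - η n)`. -/
def IsEigList {N : ℕ} (G : Matrix (Fin N) (Fin N) ℝ) (η : Fin N → ℝ) : Prop :=
  Antitone η ∧ G.charpoly = ∏ n, (Polynomial.X - Polynomial.C (η n))

/-- A simplex frame in `ℝ^N`: `d` unit vectors summing to zero with pairwise scalar
products `-1/(d-1)`. -/
def IsSimplexFrame {N : ℕ} (d : ℕ) (y : Fin d → Fin N → ℝ) : Prop :=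
  (∀ k, ∑ i, y k i ^ 2 = 1) ∧ (∀ i, ∑ k, y k i = 0) ∧
    (∀ j k, j ≠ k → ∑ i, y j i * y k i = -1 / ((d : ℝ) - 1))

/-- The operator `Π_{Ω_y} = ((d-1)/d) Σ_k y_k y_kᵀ` associated with a simplex frame. -/
def simplexProj {N : ℕ} (d : ℕ) (y : Fin d → Fin N → ℝ) : Matrix (Fin N) (Fin N) ℝ :=
  (((d : ℝ) - 1) / d) • ∑ k, Matrix.vecMulVec (y k) (y k)

/-- The matrix `G(ρ) = ((d₂-1)/(d₁ d₂)) r₂ r₂ᵀ + (1/4) T_ρᵀ T_ρ`. -/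
def Gmat {d₁ d₂ : ℕ} (ρ : Matrix (Fin d₁ × Fin d₂) (Fin d₁ × Fin d₂) ℂ)
    (Υ₁ : Fin (d₁ ^ 2 - 1) → Matrix (Fin d₁) (Fin d₁) ℂ)
    (Υ₂ : Fin (d₂ ^ 2 - 1) → Matrix (Fin d₂) (Fin d₂) ℂ) :
    Matrix (Fin (d₂ ^ 2 - 1)) (Fin (d₂ ^ 2 - 1)) ℝ :=
  (((d₂ : ℝ) - 1) / (d₁ * d₂)) •
      Matrix.vecMulVec (blochVector (ptrace1 ρ) Υ₂) (blochVector (ptrace1 ρ) Υ₂)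
    + (4 : ℝ)⁻¹ • ((corrMatrix ρ Υ₁ Υ₂)ᵀ * corrMatrix ρ Υ₁ Υ₂)

/-- The trace norm (sum of singular values) of a complex square matrix. -/
def traceNorm {n : Type*} [Fintype n] [DecidableEq n] (X : Matrix n n ℂ) : ℝ :=
  ∑ i, Real.sqrt ((Matrix.posSemidef_conjTranspose_mul_self X).1.eigenvalues i)

/-- The negativity `N_ρ = (‖ρ^{T₂}‖₁ - 1)/2`. -/
def negativity {d₁ d₂ : ℕ} (ρ : Matrix (Fin d₁ × Fin d₂) (Fin d₁ × Fin d₂) ℂ) : ℝ :=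
  (traceNorm (ptranspose2 ρ) - 1) / 2

/-- The concurrence of a pure two-qudit state, `C = √(2 (1 - tr[ρ₁²]))`, `ρ₁ = tr₂ ρ`. -/
def concurrence {d₁ d₂ : ℕ} (ρ : Matrix (Fin d₁ × Fin d₂) (Fin d₁ × Fin d₂) ℂ) : ℝ :=
  Real.sqrt (2 * (1 - ((ptrace2 ρ * ptrace2 ρ).trace).re))

end

section AuxiliaryLemmas

open Polynomial in
lemma my_charpoly_conj {R : Type*} [CommRing R] {n : Type*} [Fintype n] [DecidableEq n]
    (U V B : Matrix n n R) (hUV : U * V = 1) :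
    (U * B * V).charpoly = B.charpoly := by
  have hdet : (U.map C).det * (V.map C).det = 1 := by
    rw [← Matrix.det_mul, ← Matrix.map_mul, hUV, Matrix.map_one _ (map_zero C) (map_one C),
      Matrix.det_one]
  have hcomm : U.map C * Matrix.scalar n (X : R[X]) = Matrix.scalar n (X : R[X]) * U.map C :=
    ((Matrix.scalar_commute (X : R[X]) (fun r' => Commute.all X r') (U.map C))).symm
  have key : Matrix.charmatrix (U * B * V) = (U.map C) * Matrix.charmatrix B * (V.map C) := by
    unfold Matrix.charmatrix
    rw [Matrix.mul_sub, Matrix.sub_mul]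
    congr 1
    · rw [hcomm, mul_assoc, ← Matrix.map_mul, hUV,
        Matrix.map_one _ (map_zero C) (map_one C), mul_one]
    · simp only [RingHom.mapMatrix_apply, ← Matrix.map_mul]
  rw [Matrix.charpoly, key, Matrix.det_mul, Matrix.det_mul, Matrix.charpoly]
  calc (U.map C).det * (Matrix.charmatrix B).det * (V.map C).det
      = (Matrix.charmatrix B).det * ((U.map C).det * (V.map C).det) := by ring
    _ = (Matrix.charmatrix B).det := by rw [hdet, mul_one]

open Polynomial in
lemma my_charpoly_diagonal {R : Type*} [CommRing R] {n : Type*} [Fintype n] [DecidableEq n]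
    (μ : n → R) : (Matrix.diagonal μ).charpoly = ∏ i, (X - C (μ i)) := by
  have h : Matrix.charmatrix (Matrix.diagonal μ) = Matrix.diagonal (fun i => X - C (μ i)) := by
    ext i j
    by_cases h : i = j
    · subst h; simp [Matrix.charmatrix_apply]
    · simp [Matrix.charmatrix_apply, Matrix.diagonal_apply_ne _ h]
  rw [Matrix.charpoly, h, Matrix.det_diagonal]

lemma my_perm_of_map_eq {N : ℕ} (f g : Fin N → ℝ)
    (h : Multiset.map f Finset.univ.val = Multiset.map g Finset.univ.val) :
    ∃ σ : Equiv.Perm (Fin N), ∀ n, f n = g (σ n) := by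
  classical
  have hcard : ∀ a : ℝ, Fintype.card {n // f n = a} = Fintype.card {n // g n = a} := by
    intro a
    have hc := congrArg (Multiset.count a) h
    rw [Multiset.count_map, Multiset.count_map] at hc
    have key : ∀ h : Fin N → ℝ, Fintype.card {n // h n = a}
        = Multiset.card (Multiset.filter (fun x => a = h x) Finset.univ.val) := by
      intro h
      rw [Fintype.card_subtype, Finset.card, Finset.filter_val]
      congr 1
      apply Multiset.filter_congr
      intro x _
      exact eq_comm
    rw [key f, key g, hc]
  let E : ∀ a : ℝ, {n // f n = a} ≃ {n // g n = a} := fun a => Fintype.equivOfCardEq (hcard a)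
  refine ⟨(Equiv.sigmaFiberEquiv f).symm.trans
    ((Equiv.sigmaCongrRight E).trans (Equiv.sigmaFiberEquiv g)), fun n => ?_⟩
  simp only [Equiv.trans_apply, Equiv.sigmaFiberEquiv, Equiv.sigmaCongrRight]
  exact ((E (f n)) ⟨n, rfl⟩).2.symm

lemma my_filter_lt_eq_map {N M : ℕ} (h : M ≤ N) :
    Finset.univ.filter (fun n : Fin N => (n : ℕ) < M)
      = Finset.map ⟨Fin.castLE h, Fin.castLE_injective h⟩ Finset.univ := by
  ext n
  simp only [Finset.mem_filter, Finset.mem_univ, true_and, Finset.mem_map,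
    Function.Embedding.coeFn_mk]
  constructor
  · intro hn; exact ⟨⟨n.1, hn⟩, by ext; rfl⟩
  · rintro ⟨j, rfl⟩; exact j.2

lemma my_kyfan {N M : ℕ} (hM : M ≤ N) (hM0 : 0 < M) (ζ t : Fin N → ℝ) (hζ : Antitone ζ)
    (ht0 : ∀ n, 0 ≤ t n) (ht1 : ∀ n, t n ≤ 1) (hsum : ∑ n, t n = (M : ℝ)) :
    ∑ n, ζ n * t n ≤ ∑ n ∈ Finset.univ.filter (fun n : Fin N => (n : ℕ) < M), ζ n := by
  classical
  set S := Finset.univ.filter (fun n : Fin N => (n : ℕ) < M) with hS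
  have hcard : (S.card : ℝ) = (M : ℝ) := by
    rw [hS, my_filter_lt_eq_map hM, Finset.card_map, Finset.card_univ, Fintype.card_fin]
  set c : ℝ := ζ (Fin.castLE hM ⟨M - 1, by omega⟩) with hc
  have hge : ∀ n ∈ S, c ≤ ζ n := by
    intro n hn
    rw [hS, Finset.mem_filter] at hn
    exact hζ (by simp [Fin.le_def]; omega)
  have hle : ∀ n ∈ Sᶜ, ζ n ≤ c := by
    intro n hn
    rw [hS, Finset.mem_compl, Finset.mem_filter] at hn
    simp only [Finset.mem_univ, true_and, not_lt] at hn
    exact hζ (by simp [Fin.le_def]; omega)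
  have key : ∑ n, ζ n * t n - ∑ n ∈ S, ζ n
      = ∑ n ∈ S, ζ n * (t n - 1) + ∑ n ∈ Sᶜ, ζ n * t n := by
    rw [← Finset.sum_add_sum_compl S (fun n => ζ n * t n)]
    simp_rw [mul_sub, mul_one, Finset.sum_sub_distrib]
    ring
  have hb1 : ∑ n ∈ S, ζ n * (t n - 1) ≤ ∑ n ∈ S, c * (t n - 1) := by
    apply Finset.sum_le_sum
    intro n hn
    have := hge n hn
    nlinarith [ht1 n]
  have hb2 : ∑ n ∈ Sᶜ, ζ n * t n ≤ ∑ n ∈ Sᶜ, c * t n := by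
    apply Finset.sum_le_sum
    intro n hn
    have := hle n hn
    nlinarith [ht0 n]
  have hzero : ∑ n ∈ S, c * (t n - 1) + ∑ n ∈ Sᶜ, c * t n = 0 := by
    rw [← Finset.mul_sum, ← Finset.mul_sum, ← mul_add, Finset.sum_sub_distrib]
    have h1 : ∑ n ∈ S, t n + ∑ n ∈ Sᶜ, t n = (M : ℝ) := by
      rw [Finset.sum_add_sum_compl]; exact hsum
    have h2 : ∑ n ∈ S, (1:ℝ) = (M : ℝ) := by simp [hcard]
    have h3 : ∑ n ∈ S, t n - ∑ n ∈ S, (1:ℝ) + ∑ n ∈ Sᶜ, t n = 0 := by linarith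
    rw [h3, mul_zero]
  linarith [key, hb1, hb2, hzero]

lemma my_simplex_coords (m : ℕ) : ∃ Q : Matrix (Fin (m+2)) (Fin (m+1)) ℝ,
    (∀ j j', ∑ k, Q k j * Q k j' = if j = j' then 1 else 0) ∧
    (∀ k k', ∑ j, Q k j * Q k' j = (if k = k' then 1 else 0) - ((m:ℝ)+2)⁻¹) ∧
    (∀ j, ∑ k, Q k j = 0) := by
  classical
  set b : ℝ := (Real.sqrt ((m:ℝ)+2))⁻¹ with hbdef
  have hm2 : (0:ℝ) < (m:ℝ) + 2 := by positivity
  have hsq : Real.sqrt ((m:ℝ)+2) * Real.sqrt ((m:ℝ)+2) = (m:ℝ)+2 :=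
    Real.mul_self_sqrt (le_of_lt hm2)
  have hsqpos : 0 < Real.sqrt ((m:ℝ)+2) := Real.sqrt_pos.2 hm2
  have hb2 : b * b = ((m:ℝ)+2)⁻¹ := by rw [hbdef, ← mul_inv, hsq]
  have hbpos : 0 < b := by positivity
  have h12 : (1:ℝ) < (m:ℝ) + 2 := by
    have := Nat.cast_nonneg (α := ℝ) m; linarith
  have hb1 : b < 1 := by
    rw [hbdef, inv_lt_one_iff₀]
    right
    have : Real.sqrt 1 < Real.sqrt ((m:ℝ)+2) := Real.sqrt_lt_sqrt (by norm_num) h12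
    simpa using this
  set L : Fin (m+2) := Fin.last (m+1) with hL
  set w : Fin (m+2) → ℝ := fun k => b - (if k = L then 1 else 0) with hw
  set s : ℝ := 2 * (1 - b) with hs
  have hspos : 0 < s := by rw [hs]; linarith
  have hsne : s ≠ 0 := ne_of_gt hspos
  have hbne : (1:ℝ) - b ≠ 0 := by linarith
  have hww : ∑ k, w k * w k = s := by
    have hterm : ∀ k, w k * w k = b*b - (2*b)*(if k = L then 1 else 0)
        + (if k = L then 1 else 0) := by
      intro k
      by_cases h : k = L <;> simp [hw, h] <;> ring
    rw [Finset.sum_congr rfl (fun k _ => hterm k)]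
    simp only [Finset.sum_add_distrib, Finset.sum_sub_distrib, Finset.sum_const,
      Finset.card_univ, Fintype.card_fin, nsmul_eq_mul, mul_ite, mul_one, mul_zero,
      Finset.sum_ite_eq', Finset.mem_univ, if_true]
    have hmm : ((m:ℝ)+2) * (b*b) = 1 := by
      rw [hb2]; field_simp
    push_cast
    rw [hs]
    linarith
  set H : Matrix (Fin (m+2)) (Fin (m+2)) ℝ :=
    Matrix.of (fun k l => (if k = l then 1 else 0) - (2/s) * (w k * w l)) with hH
  have hHsym : ∀ k l, H k l = H l k := by
    intro k l
    simp only [hH, Matrix.of_apply]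
    rw [if_congr (Iff.intro Eq.symm Eq.symm) rfl rfl]
    ring
  have hHL : ∀ k, H k L = b := by
    intro k
    have hwL : w L = b - 1 := by simp [hw]
    have h2s : (2/s) * (w L) = -1 := by
      rw [hwL, hs]; field_simp; ring
    simp only [hH, Matrix.of_apply]
    calc (if k = L then (1:ℝ) else 0) - 2/s*(w k * w L)
        = (if k = L then 1 else 0) - ((2/s)*w L)*w k := by ring
      _ = (if k = L then 1 else 0) + w k := by rw [h2s]; ring
      _ = b := by by_cases h : k = L <;> simp [hw, h]
  have hHH : ∀ a c, ∑ k, H a k * H k c = if a = c then 1 else 0 := by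
    intro a c
    have expand : ∀ k, H a k * H k c =
        (if a = k then 1 else 0) * (if k = c then 1 else 0)
        - (2/s) * ((if a = k then 1 else 0) * (w k * w c))
        - (2/s) * ((w a * w k) * (if k = c then 1 else 0))
        + (2/s)^2 * (w a * w c) * (w k * w k) := by
      intro k
      simp only [hH, Matrix.of_apply]
      ring
    rw [Finset.sum_congr rfl (fun k _ => expand k)]
    rw [Finset.sum_add_distrib, Finset.sum_sub_distrib, Finset.sum_sub_distrib,
      ← Finset.mul_sum, ← Finset.mul_sum, ← Finset.mul_sum, hww]
    have e1 : ∑ k, (if a = k then (1:ℝ) else 0) * (if k = c then 1 else 0)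
        = if a = c then 1 else 0 := by
      simp only [ite_mul, one_mul, zero_mul, Finset.sum_ite_eq, Finset.mem_univ, if_true]
    have e2 : ∑ k, (if a = k then (1:ℝ) else 0) * (w k * w c) = w a * w c := by
      simp only [ite_mul, one_mul, zero_mul, Finset.sum_ite_eq, Finset.mem_univ, if_true]
    have e3 : ∑ k, (w a * w k) * (if k = c then (1:ℝ) else 0) = w a * w c := by
      simp only [mul_ite, mul_one, mul_zero, Finset.sum_ite_eq', Finset.mem_univ, if_true]
    rw [e1, e2, e3]
    have hkey : -(2/s*(w a * w c)) - 2/s*(w a * w c) + (2/s)^2*(w a * w c)*s = 0 := by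
      field_simp
      ring
    linarith
  refine ⟨Matrix.of (fun k j => H k (Fin.castSucc j)), ?_, ?_, ?_⟩
  · intro j j'
    simp only [Matrix.of_apply]
    have hc : ∀ k, H k (Fin.castSucc j) * H k (Fin.castSucc j')
        = H (Fin.castSucc j) k * H k (Fin.castSucc j') := fun k => by rw [hHsym]
    rw [Finset.sum_congr rfl (fun k _ => hc k), hHH]
    simp [Fin.castSucc_inj]
  · intro k k'
    simp only [Matrix.of_apply]
    have total : ∑ l, H k l * H k' l = if k = k' then 1 else 0 := by
      have hc : ∀ l, H k l * H k' l = H k l * H l k' := fun l => by rw [hHsym l k']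
      rw [Finset.sum_congr rfl (fun l _ => hc l), hHH]
    have split := Fin.sum_univ_castSucc (f := fun l : Fin (m+2) => H k l * H k' l)
    rw [total, ← hL, hHL, hHL, hb2] at split
    linarith
  · intro j
    simp only [Matrix.of_apply]
    have h0 : ∑ k, H k L * H k (Fin.castSucc j) = 0 := by
      have hc : ∀ k, H k L * H k (Fin.castSucc j)
          = H L k * H k (Fin.castSucc j) := fun k => by rw [hHsym]
      rw [Finset.sum_congr rfl (fun k _ => hc k), hHH]
      have hne : L ≠ Fin.castSucc j := (Fin.castSucc_lt_last j).ne'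
      simp [hne]
    have hfac : ∑ k, H k (Fin.castSucc j) = b⁻¹ * ∑ k, H k L * H k (Fin.castSucc j) := by
      rw [Finset.mul_sum]
      apply Finset.sum_congr rfl
      intro k _
      rw [hHL k, ← mul_assoc, inv_mul_cancel₀ (ne_of_gt hbpos), one_mul]
    rw [hfac, h0, mul_zero]

lemma my_sum_comm3 {K J J' : Type*} [Fintype K] [Fintype J] [Fintype J']
    (f : K → J → ℝ) (g : K → J' → ℝ) :
    ∑ k, (∑ j, f k j) * (∑ j', g k j') = ∑ j, ∑ j', ∑ k, f k j * g k j' := by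
  simp_rw [Finset.sum_mul_sum]
  rw [Finset.sum_comm]
  apply Finset.sum_congr rfl
  intro j _
  rw [Finset.sum_comm]

lemma my_frame_of_orthonormal {N m : ℕ} (V : Fin (m+1) → Fin N → ℝ)
    (hV : ∀ j j', ∑ i, V j i * V j' i = if j = j' then 1 else 0) :
    ∃ y : Fin (m+2) → Fin N → ℝ, IsSimplexFrame (m+2) y ∧
      simplexProj (m+2) y = ∑ j, Matrix.vecMulVec (V j) (V j) := by
  classical
  obtain ⟨Q, hQ1, hQ2, hQ3⟩ := my_simplex_coords m
  set c : ℝ := ((m:ℝ)+2)/((m:ℝ)+1) with hcdef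
  have hm1 : (0:ℝ) < (m:ℝ)+1 := by positivity
  have hm2 : (0:ℝ) < (m:ℝ)+2 := by positivity
  have hcpos : 0 < c := by positivity
  set r : ℝ := Real.sqrt c with hrdef
  have hr2 : r * r = c := Real.mul_self_sqrt (le_of_lt hcpos)
  set y : Fin (m+2) → Fin N → ℝ := fun k i => r * ∑ j, Q k j * V j i with hy
  have gram : ∀ k k', ∑ i, y k i * y k' i = c * ((if k = k' then 1 else 0) - ((m:ℝ)+2)⁻¹) := by
    intro k k'
    have e1 : ∀ i, y k i * y k' i
        = r * r * ((∑ j, Q k j * V j i) * (∑ j', Q k' j' * V j' i)) := by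
      intro i; rw [hy]; ring
    rw [Finset.sum_congr rfl fun i _ => e1 i, ← Finset.mul_sum,
      my_sum_comm3 (fun i j => Q k j * V j i) (fun i j' => Q k' j' * V j' i)]
    have e2 : ∀ j j', ∑ i, (Q k j * V j i) * (Q k' j' * V j' i)
        = Q k j * Q k' j' * (if j = j' then 1 else 0) := by
      intro j j'
      rw [← hV j j', Finset.mul_sum]
      apply Finset.sum_congr rfl
      intro i _; ring
    simp_rw [e2]
    simp only [mul_ite, mul_one, mul_zero, Finset.sum_ite_eq, Finset.mem_univ, if_true]
    rw [hQ2 k k', hr2]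
  have hframe : IsSimplexFrame (m+2) y := by
    refine ⟨?_, ?_, ?_⟩
    · intro k
      have h := gram k k
      rw [if_pos rfl] at h
      have hc1 : c * (1 - ((m:ℝ)+2)⁻¹) = 1 := by
        rw [hcdef]; field_simp; ring
      simp_rw [sq]
      rw [h, hc1]
    · intro i
      have h : ∑ k, y k i = r * ∑ j, (∑ k, Q k j) * V j i := by
        rw [hy, ← Finset.mul_sum]
        congr 1
        rw [Finset.sum_comm]
        apply Finset.sum_congr rfl
        intro j _
        rw [Finset.sum_mul]
      rw [h]
      simp_rw [hQ3]
      simp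
    · intro k k' hkk'
      have h := gram k k'
      rw [if_neg hkk'] at h
      rw [h]
      have hgoal : c * (0 - ((m:ℝ)+2)⁻¹) = -1/((m:ℝ)+1) := by
        rw [hcdef]; field_simp; ring
      rw [hgoal]
      push_cast
      rw [show ((m:ℝ)+2)-1 = (m:ℝ)+1 from by ring]
  refine ⟨y, hframe, ?_⟩
  ext a b
  simp only [simplexProj, Matrix.smul_apply, Matrix.sum_apply, Matrix.vecMulVec_apply,
    smul_eq_mul]
  have e1 : ∀ k, y k a * y k b = r * r * ((∑ j, Q k j * V j a) * (∑ j', Q k j' * V j' b)) := by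
    intro k; rw [hy]; ring
  rw [Finset.sum_congr rfl fun k _ => e1 k, ← Finset.mul_sum,
    my_sum_comm3 (fun k j => Q k j * V j a) (fun k j' => Q k j' * V j' b)]
  have e2 : ∀ j j', ∑ k, (Q k j * V j a) * (Q k j' * V j' b)
      = (if j = j' then 1 else 0) * (V j a * V j' b) := by
    intro j j'
    rw [← hQ1 j j', Finset.sum_mul]
    apply Finset.sum_congr rfl
    intro k _; ring
  simp_rw [e2]
  simp only [ite_mul, one_mul, zero_mul, Finset.sum_ite_eq, Finset.mem_univ, if_true]
  rw [hr2]
  have h1 : ((m:ℝ)+2 - 1)/((m:ℝ)+2) * c = 1 := by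
    rw [hcdef]; field_simp; ring
  push_cast
  rw [← mul_assoc, h1, one_mul]

lemma my_proj_apply {N d : ℕ} (y : Fin d → Fin N → ℝ) (a b : Fin N) :
    simplexProj d y a b = ((d:ℝ)-1)/d * ∑ k, y k a * y k b := by
  simp [simplexProj, Matrix.sum_apply, Matrix.vecMulVec_apply]

lemma my_proj_symm {N d : ℕ} (y : Fin d → Fin N → ℝ) (a b : Fin N) :
    simplexProj d y a b = simplexProj d y b a := by
  rw [my_proj_apply, my_proj_apply]
  congr 1
  apply Finset.sum_congr rfl
  intro k _; ring

lemma my_trace_mul {n : Type*} [Fintype n] (A B : Matrix n n ℝ) :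
    (A*B).trace = ∑ a, ∑ b, A a b * B b a := by
  simp [Matrix.trace, Matrix.mul_apply, Matrix.diag]

lemma my_proj_trace {N d : ℕ} (hd : 2 ≤ d) (y : Fin d → Fin N → ℝ)
    (hy : IsSimplexFrame d y) : (simplexProj d y).trace = (d:ℝ) - 1 := by
  have hd2 : (2:ℝ) ≤ (d:ℝ) := by exact_mod_cast hd
  have hdne : (d:ℝ) ≠ 0 := by linarith
  have h : (simplexProj d y).trace = ((d:ℝ)-1)/d * ∑ k : Fin d, ∑ a : Fin N, y k a * y k a := by
    rw [Matrix.trace]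
    simp only [Matrix.diag]
    rw [Finset.sum_congr rfl fun a _ => my_proj_apply y a a, ← Finset.mul_sum,
      Finset.sum_comm]
  rw [h]
  have h1 : ∀ k : Fin d, ∑ a : Fin N, y k a * y k a = 1 := by
    intro k
    have := hy.1 k
    simp_rw [sq] at this
    exact this
  rw [Finset.sum_congr rfl fun k _ => h1 k]
  simp only [Finset.sum_const, Finset.card_univ, Fintype.card_fin, nsmul_eq_mul, mul_one]
  field_simp

lemma my_proj_idem {N d : ℕ} (hd : 2 ≤ d) (y : Fin d → Fin N → ℝ)
    (hy : IsSimplexFrame d y) :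
    simplexProj d y * simplexProj d y = simplexProj d y := by
  have hd2 : (2:ℝ) ≤ (d:ℝ) := by exact_mod_cast hd
  have hdne : (d:ℝ) ≠ 0 := by linarith
  have hd1ne : (d:ℝ) - 1 ≠ 0 := by linarith
  set q : ℝ := ((d:ℝ)-1)/d with hqdef
  set e : ℝ := 1/((d:ℝ)-1) with he
  have hGram : ∀ k k', ∑ i, y k i * y k' i
      = (if k = k' then (1:ℝ) else 0) * (1 + e) - e := by
    intro k k'
    by_cases h : k = k'
    · subst h
      rw [if_pos rfl, one_mul]
      have h1 := hy.1 k
      simp_rw [sq] at h1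
      rw [h1, he]; ring
    · rw [if_neg h, zero_mul, hy.2.2 k k' h, he]; ring
  ext a b
  rw [Matrix.mul_apply]
  have key : ∑ c, simplexProj d y a c * simplexProj d y c b
      = q*q * ((1+e) * (∑ k, y k a * y k b) - e * ((∑ k, y k a) * (∑ k', y k' b))) := by
    calc ∑ c, simplexProj d y a c * simplexProj d y c b
        = q*q * ∑ c, (∑ k, y k a * y k c) * (∑ k', y k' c * y k' b) := by
          rw [Finset.mul_sum]
          apply Finset.sum_congr rfl
          intro c _
          rw [my_proj_apply y a c, my_proj_apply y c b]; ring
      _ = q*q * ∑ k, ∑ k', ∑ c, (y k a * y k c) * (y k' c * y k' b) := by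
          rw [my_sum_comm3]
      _ = q*q * ∑ k, ∑ k', ((if k = k' then (1:ℝ) else 0) * (1 + e) - e) * (y k a * y k' b) := by
          congr 1
          apply Finset.sum_congr rfl; intro k _
          apply Finset.sum_congr rfl; intro k' _
          rw [← hGram k k', Finset.sum_mul]
          apply Finset.sum_congr rfl; intro c _; ring
      _ = q*q * ((1+e) * (∑ k, y k a * y k b) - e * ((∑ k, y k a) * (∑ k', y k' b))) := by
          congr 1
          have inner : ∀ k, ∑ k', ((if k = k' then (1:ℝ) else 0)*(1+e) - e) * (y k a * y k' b)
              = (1+e) * (y k a * y k b) - e * (y k a * ∑ k', y k' b) := by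
            intro k
            have step : ∀ k', ((if k = k' then (1:ℝ) else 0)*(1+e) - e) * (y k a * y k' b)
                = (if k = k' then (1+e) * (y k a * y k' b) else 0) - e * (y k a * y k' b) := by
              intro k'
              by_cases h : k = k' <;> simp [h] <;> ring
            rw [Finset.sum_congr rfl fun k' _ => step k', Finset.sum_sub_distrib,
              Finset.sum_ite_eq, if_pos (Finset.mem_univ k)]
            congr 1
            rw [← Finset.mul_sum]
            congr 1
            rw [← Finset.mul_sum]
          rw [Finset.sum_congr rfl fun k _ => inner k, Finset.sum_sub_distrib, ← Finset.mul_sum]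
          congr 1
          have h2 : ∀ k, e * (y k a * ∑ k', y k' b) = (e * ∑ k', y k' b) * y k a := by
            intro k; ring
          rw [Finset.sum_congr rfl fun k _ => h2 k, ← Finset.mul_sum]
          ring
  rw [key, hy.2.1 a, hy.2.1 b]
  have hqe : q * q * (1+e) = q := by
    rw [hqdef, he]; field_simp; ring
  rw [my_proj_apply]
  calc q*q*((1+e) * (∑ k, y k a * y k b) - e * (0 * 0))
      = (q*q*(1+e)) * (∑ k, y k a * y k b) := by ring
    _ = q * ∑ k, y k a * y k b := by rw [hqe]

end AuxiliaryLemmas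
/-- for a positive semidefinite symmetric `A` on `ℝ^{d²-1}` with decreasingly
ordered eigenvalues `ζ`, the maximum over simplex frames of `tr[A Π_{Ω_y}]` is attained and
equals `ζ₁ + … + ζ_{d-1}`. -/
theorem stmt2 {d : ℕ} (hd : 2 ≤ d) (A : Matrix (Fin (d ^ 2 - 1)) (Fin (d ^ 2 - 1)) ℝ)
    (hA : A.PosSemidef) (ζ : Fin (d ^ 2 - 1) → ℝ) (hζ : IsEigList A ζ) :
    IsGreatest {x : ℝ | ∃ y : Fin d → Fin (d ^ 2 - 1) → ℝ,
        IsSimplexFrame d y ∧ x = (A * simplexProj d y).trace}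
      (∑ n ∈ Finset.univ.filter (fun n : Fin (d ^ 2 - 1) => (n : ℕ) < d - 1), ζ n) := by
  classical
  obtain ⟨m, rfl⟩ : ∃ m, d = m + 2 := ⟨d - 2, by omega⟩
  have hN : m + 1 ≤ (m + 2) ^ 2 - 1 := by
    have h : (m + 2) ^ 2 = m * m + 4 * m + 4 := by ring
    omega
  have hH : A.IsHermitian := hA.1
  set μ : Fin ((m + 2) ^ 2 - 1) → ℝ := hH.eigenvalues with hμdef
  set U : Matrix (Fin ((m + 2) ^ 2 - 1)) (Fin ((m + 2) ^ 2 - 1)) ℝ :=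
    (hH.eigenvectorUnitary : Matrix (Fin ((m + 2) ^ 2 - 1)) (Fin ((m + 2) ^ 2 - 1)) ℝ) with hUdef
  have hU1 : U * star U = 1 := (Matrix.mem_unitaryGroup_iff).mp hH.eigenvectorUnitary.2
  have hU2 : star U * U = 1 := (Matrix.mem_unitaryGroup_iff').mp hH.eigenvectorUnitary.2
  have hstar : ∀ i j, (star U) i j = U j i := by
    intro i j
    rw [Matrix.star_apply, star_trivial]
  have horth : ∀ n n', ∑ i, U i n * U i n' = if n = n' then (1:ℝ) else 0 := by
    intro n n'
    have h := congrFun (congrFun hU2 n) n'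
    rw [Matrix.mul_apply] at h
    rw [Finset.sum_congr rfl (fun i _ => by rw [hstar n i]) ] at h
    rw [h, Matrix.one_apply]
  have hcompl : ∀ a b, ∑ n, U a n * U b n = if a = b then (1:ℝ) else 0 := by
    intro a b
    have h := congrFun (congrFun hU1 a) b
    rw [Matrix.mul_apply] at h
    rw [Finset.sum_congr rfl (fun n _ => by rw [hstar n b]) ] at h
    rw [h, Matrix.one_apply]
  have hspec : A = U * Matrix.diagonal μ * star U := by
    have h := hH.spectral_theorem
    rwa [show RCLike.ofReal ∘ hH.eigenvalues = μ from by
      funext i; simp [hμdef, RCLike.ofReal_real_eq_id]] at h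
  have hchar : A.charpoly = ∏ n, (Polynomial.X - Polynomial.C (μ n)) := by
    calc A.charpoly = (U * Matrix.diagonal μ * star U).charpoly := by rw [← hspec]
      _ = (Matrix.diagonal μ).charpoly := my_charpoly_conj U (star U) _ hU1
      _ = ∏ n, (Polynomial.X - Polynomial.C (μ n)) := my_charpoly_diagonal μ
  have hms : Multiset.map ζ Finset.univ.val = Multiset.map μ Finset.univ.val := by
    have hroots : ∀ f : Fin ((m + 2) ^ 2 - 1) → ℝ,
        (∏ n, (Polynomial.X - Polynomial.C (f n))).roots = Multiset.map f Finset.univ.val := by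
      intro f
      have h : ∏ n, (Polynomial.X - Polynomial.C (f n))
          = (Multiset.map (fun a => Polynomial.X - Polynomial.C a)
              (Multiset.map f Finset.univ.val)).prod := by
        rw [Multiset.map_map, Finset.prod_eq_multiset_prod]
        rfl
      rw [h, Polynomial.roots_multiset_prod_X_sub_C]
    calc Multiset.map ζ Finset.univ.val
        = (∏ n, (Polynomial.X - Polynomial.C (ζ n))).roots := (hroots ζ).symm
      _ = (∏ n, (Polynomial.X - Polynomial.C (μ n))).roots := by rw [← hζ.2, hchar]
      _ = Multiset.map μ Finset.univ.val := hroots μ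
  obtain ⟨σ, hσ⟩ := my_perm_of_map_eq ζ μ hms
  constructor
  · -- membership: construct an optimal simplex frame from the top eigenvectors
    set ι : Fin (m + 1) → Fin ((m + 2) ^ 2 - 1) := Fin.castLE hN with hιdef
    set V : Fin (m + 1) → Fin ((m + 2) ^ 2 - 1) → ℝ :=
      fun j i => U i (σ (ι j)) with hVdef
    have hVorth : ∀ j j', ∑ i, V j i * V j' i = if j = j' then 1 else 0 := by
      intro j j'
      rw [hVdef]
      simp only
      rw [horth]
      by_cases h : j = j'
      · simp [h]
      · rw [if_neg h, if_neg]
        intro hc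
        exact h (Fin.castLE_injective hN (σ.injective hc))
    have hVeig : ∀ j, A *ᵥ V j = ζ (ι j) • V j := by
      intro j
      have hb : V j = ⇑(hH.eigenvectorBasis (σ (ι j))) := rfl
      rw [hb, hH.mulVec_eigenvectorBasis, ← hμdef, ← hσ (ι j)]
    obtain ⟨y, hyframe, hyproj⟩ := my_frame_of_orthonormal V hVorth
    refine ⟨y, hyframe, ?_⟩
    have hsplit : (A * simplexProj (m + 2) y).trace
        = ∑ j, (A * Matrix.vecMulVec (V j) (V j)).trace := by
      rw [hyproj, Finset.mul_sum, Matrix.trace_sum]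
    rw [hsplit]
    have hterm : ∀ j, (A * Matrix.vecMulVec (V j) (V j)).trace = ζ (ι j) := by
      intro j
      rw [my_trace_mul]
      have h1 : ∀ a, ∑ b, A a b * Matrix.vecMulVec (V j) (V j) b a
          = (A *ᵥ V j) a * V j a := by
        intro a
        rw [Matrix.mulVec, dotProduct, Finset.sum_mul]
        apply Finset.sum_congr rfl
        intro b _
        rw [Matrix.vecMulVec_apply]
        ring
      rw [Finset.sum_congr rfl fun a _ => h1 a]
      have h2 : ∀ a, (A *ᵥ V j) a * V j a = ζ (ι j) * (V j a * V j a) := by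
        intro a
        rw [hVeig j]
        simp [smul_eq_mul]
        ring
      rw [Finset.sum_congr rfl fun a _ => h2 a, ← Finset.mul_sum, hVorth j j, if_pos rfl,
        mul_one]
    rw [Finset.sum_congr rfl fun j _ => hterm j]
    rw [my_filter_lt_eq_map (show m + 2 - 1 ≤ (m + 2) ^ 2 - 1 from hN), Finset.sum_map]
    rfl
  · -- upper bound
    rintro x ⟨y, hy, rfl⟩
    set P : Matrix (Fin ((m + 2) ^ 2 - 1)) (Fin ((m + 2) ^ 2 - 1)) ℝ :=
      simplexProj (m + 2) y with hPdef
    have hPidem : P * P = P := my_proj_idem (by omega) y hy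
    have hPsymm : ∀ a b, P a b = P b a := fun a b => my_proj_symm y a b
    have hPtr : P.trace = ((m + 2 : ℕ) : ℝ) - 1 := my_proj_trace (by omega) y hy
    set t : Fin ((m + 2) ^ 2 - 1) → ℝ :=
      fun n => ∑ a, ∑ b, U a n * P a b * U b n with htdef
    have hkey : ∀ n, t n = ∑ c, (∑ a, P c a * U a n) * (∑ b, P c b * U b n) := by
      intro n
      rw [my_sum_comm3 (fun c a => P c a * U a n) (fun c b => P c b * U b n)]
      rw [htdef]
      apply Finset.sum_congr rfl; intro a _
      apply Finset.sum_congr rfl; intro b _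
      have hc : ∑ c, (P c a * U a n) * (P c b * U b n)
          = (∑ c, P a c * P c b) * (U a n * U b n) := by
        rw [Finset.sum_mul]
        apply Finset.sum_congr rfl
        intro c _
        rw [hPsymm c a]
        ring
      rw [hc, ← Matrix.mul_apply, hPidem]
      ring
    have ht0 : ∀ n, 0 ≤ t n := by
      intro n
      rw [hkey n]
      apply Finset.sum_nonneg
      intro c _
      exact mul_self_nonneg _
    have hUnorm : ∀ n, ∑ c, U c n * U c n = 1 := by
      intro n
      rw [horth n n, if_pos rfl]
    have hvt : ∀ n, ∑ c, U c n * (∑ a, P c a * U a n) = t n := by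
      intro n
      rw [htdef]
      apply Finset.sum_congr rfl
      intro c _
      rw [Finset.mul_sum]
      apply Finset.sum_congr rfl
      intro a _
      ring
    have ht1 : ∀ n, t n ≤ 1 := by
      intro n
      have hpos : 0 ≤ ∑ c, (U c n - ∑ a, P c a * U a n) * (U c n - ∑ a, P c a * U a n) :=
        Finset.sum_nonneg fun c _ => mul_self_nonneg _
      have e : ∀ c, (U c n - ∑ a, P c a * U a n) * (U c n - ∑ a, P c a * U a n)
          = U c n * U c n - 2 * (U c n * (∑ a, P c a * U a n))
            + (∑ a, P c a * U a n) * (∑ b, P c b * U b n) := by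
        intro c; ring
      have hexp : ∑ c, (U c n - ∑ a, P c a * U a n) * (U c n - ∑ a, P c a * U a n)
          = (∑ c, U c n * U c n) - 2 * (∑ c, U c n * (∑ a, P c a * U a n))
            + ∑ c, (∑ a, P c a * U a n) * (∑ b, P c b * U b n) := by
        rw [Finset.sum_congr rfl fun c _ => e c, Finset.sum_add_distrib,
          Finset.sum_sub_distrib, ← Finset.mul_sum]
      rw [hexp, hUnorm n, hvt n, ← hkey n] at hpos
      linarith
    have hsum : ∑ n, t n = ((m : ℝ) + 1) := by
      have h : ∑ n, t n = ∑ a, ∑ b, P a b * (if a = b then (1:ℝ) else 0) := by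
        rw [htdef, Finset.sum_comm]
        apply Finset.sum_congr rfl
        intro a _
        rw [Finset.sum_comm]
        apply Finset.sum_congr rfl
        intro b _
        rw [← hcompl a b, Finset.mul_sum]
        apply Finset.sum_congr rfl
        intro n _
        ring
      rw [h]
      simp only [mul_ite, mul_one, mul_zero, Finset.sum_ite_eq, Finset.sum_ite_eq',
        Finset.mem_univ, if_true]
      have : ∑ a, P a a = P.trace := rfl
      rw [this, hPtr]
      push_cast
      ring
    have htrace : (A * P).trace = ∑ n, μ n * t n := by
      have hAentry : ∀ a b, A a b = ∑ n, μ n * (U a n * U b n) := by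
        intro a b
        conv_lhs => rw [hspec]
        rw [Matrix.mul_apply]
        apply Finset.sum_congr rfl
        intro n _
        rw [Matrix.mul_diagonal, hstar]
        ring
      rw [my_trace_mul]
      calc ∑ a, ∑ b, A a b * P b a
          = ∑ a, ∑ b, ∑ n, μ n * (U a n * U b n) * P b a := by
            apply Finset.sum_congr rfl; intro a _
            apply Finset.sum_congr rfl; intro b _
            rw [hAentry a b, Finset.sum_mul]
        _ = ∑ a, ∑ n, ∑ b, μ n * (U a n * U b n) * P b a := by
            apply Finset.sum_congr rfl; intro a _
            rw [Finset.sum_comm]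
        _ = ∑ n, ∑ a, ∑ b, μ n * (U a n * U b n) * P b a := Finset.sum_comm
        _ = ∑ n, μ n * t n := by
            apply Finset.sum_congr rfl; intro n _
            rw [htdef, Finset.mul_sum]
            apply Finset.sum_congr rfl; intro a _
            rw [Finset.mul_sum]
            apply Finset.sum_congr rfl; intro b _
            rw [hPsymm b a]
            ring
    rw [htrace]
    have hreindex : ∑ n, μ n * t n = ∑ n, ζ n * (t ∘ σ) n := by
      rw [← Equiv.sum_comp σ (fun n => μ n * t n)]
      apply Finset.sum_congr rfl
      intro n _
      rw [hσ n]
      rfl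
    rw [hreindex]
    have := my_kyfan hN (by omega) ζ (t ∘ σ) hζ.1 (fun n => ht0 (σ n)) (fun n => ht1 (σ n))
      (by rw [show ∑ n, (t ∘ σ) n = ∑ n, t n from Equiv.sum_comp σ t, hsum]; push_cast; ring)
    exact this
end

section
/- For any pure two-qubit state ρ = |ψ⟩⟨ψ| on ℂ²⊗ℂ², the geometric quantum discord equals half the squared concurrence: D_g(|ψ⟩⟨ψ|) = (1/2)·C_{|ψ⟩⟨ψ|}², where C_{|ψ⟩⟨ψ|} = √(2(1 − tr[ρ₁²])) and ρ₁ = tr₂ρ. -/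
open Matrix Finset
open scoped Kronecker ComplexOrder

/-! Write a quantum-classical state as `χ = Σ_k M_k ⊗ |e_k⟩⟨e_k|` with `M_k = α_k σ_k`, and let
`v_k = (1 ⊗ ⟨e_k|) ψ`. Then `ρ₁ = Σ_k |v_k⟩⟨v_k|` and the Hilbert–Schmidt distance splits as
`tr (ρ - χ)² = 1 - Σ_k ‖v_k‖⁴ + Σ_k tr (M_k - |v_k⟩⟨v_k|)²`, while
`tr ρ₁² = Σ_{k,l} |⟨v_k|v_l⟩|² ≥ Σ_k ‖v_k‖⁴`. Hence `D_g ≥ 1 - tr ρ₁²`, with equality when `e` is an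
eigenbasis of `ρ₂` (which makes the `v_k` orthogonal) and `M_k = |v_k⟩⟨v_k|`. This holds in every
dimension, and `C² = 2 (1 - tr ρ₁²)`. -/

section Matrices

variable {n : Type*} [Fintype n]

lemma trace_sub_mul_sub {R : Type*} [CommRing R] (A B : Matrix n n R) :
    ((A - B) * (A - B)).trace = (A * A).trace - 2 * (A * B).trace + (B * B).trace := by
  simp only [sub_mul, mul_sub, trace_sub, trace_mul_comm B A]
  ring

lemma pureState_posSemidef (v : n → ℂ) : (pureState v).PosSemidef :=
  posSemidef_vecMulVec_self_star v

lemma trace_pureState_mul_pureState (v w : n → ℂ) :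
    (pureState v * pureState w).trace = Complex.normSq (star v ⬝ᵥ w) := by
  rw [pureState, pureState, vecMulVec_mul_vecMulVec, trace_vecMulVec, dotProduct_smul,
    smul_eq_mul, dotProduct_comm, dotProduct_star v w, Complex.star_def, Complex.mul_conj]

lemma re_trace_mul_self_nonneg {H : Matrix n n ℂ} (hH : H.IsHermitian) :
    0 ≤ (H * H).trace.re := by
  have := (posSemidef_conjTranspose_mul_self H).trace_nonneg
  rw [hH.eq] at this
  exact (Complex.nonneg_iff.mp this).1

lemma trace_pureState (ψ : n → ℂ) : (pureState ψ).trace = ∑ i, Complex.normSq (ψ i) := by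
  simp [pureState, dotProduct, Complex.mul_conj]

lemma trace_pureState_mul_self_eq_one {ψ : n → ℂ} (hψ : ∑ i, Complex.normSq (ψ i) = 1) :
    (pureState ψ * pureState ψ).trace = 1 := by
  have : star ψ ⬝ᵥ ψ = 1 := by
    simp only [dotProduct, Pi.star_apply, Complex.star_def, mul_comm, Complex.mul_conj]
    exact_mod_cast hψ
  rw [trace_pureState_mul_pureState, this, map_one, Complex.ofReal_one]

end Matrices

section Bipartite

variable {m n ι : Type*} [Fintype m] [Fintype n]

def IsOrthonormalFamily [DecidableEq ι] (e : ι → n → ℂ) : Prop :=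
  ∀ k l, ∑ i, star (e k i) * e l i = if k = l then (1 : ℂ) else 0

def partialInner (ψ : m × n → ℂ) (e : n → ℂ) : m → ℂ :=
  fun i => ∑ j, ψ (i, j) * star (e j)

lemma trace_pureState_mul_kronecker_pureState (ψ : m × n → ℂ) (M : Matrix m m ℂ) (e : n → ℂ) :
    (pureState ψ * (M ⊗ₖ pureState e)).trace = (pureState (partialInner ψ e) * M).trace := by
  simp only [trace, Matrix.diag, mul_apply, pureState, vecMulVec_apply, kroneckerMap_apply,
    partialInner, Pi.star_apply, star_sum, star_mul', star_star, Fintype.sum_prod_type,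
    sum_mul, mul_sum]
  refine sum_congr rfl fun i _ => ?_
  rw [sum_comm]
  refine sum_congr rfl fun j _ => ?_
  rw [sum_comm]
  refine sum_congr rfl fun i' _ => sum_congr rfl fun j' _ => ?_
  ring

lemma trace_kronecker_pureState_mul [DecidableEq ι] {e : ι → n → ℂ}
    (he : IsOrthonormalFamily e) (A B : Matrix m m ℂ) (k l : ι) :
    ((A ⊗ₖ pureState (e k)) * (B ⊗ₖ pureState (e l))).trace
      = if k = l then (A * B).trace else 0 := by
  rw [← mul_kronecker_mul, trace_kronecker, trace_pureState_mul_pureState]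
  have : star (e k) ⬝ᵥ e l = if k = l then 1 else 0 := he k l
  split_ifs with hkl <;> simp_all

lemma IsOrthonormalFamily.sum_mul_star [DecidableEq n] {e : n → n → ℂ}
    (he : IsOrthonormalFamily e) (j j' : n) :
    ∑ k, e k j * star (e k j') = if j = j' then 1 else 0 := by
  let U : Matrix n n ℂ := Matrix.of fun j k => e k j
  have hU : Uᴴ * U = 1 := by
    ext k l
    simpa [U, mul_apply, one_apply] using he k l
  have hU' : U * Uᴴ = 1 := mul_eq_one_comm.mp hU
  simpa [U, mul_apply, one_apply] using congrFun (congrFun hU' j) j'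

lemma trace_sum_pureState_mul_sum_pureState [Fintype ι] (v : ι → n → ℂ) :
    ((∑ k, pureState (v k)) * ∑ k, pureState (v k)).trace
      = ∑ k, ∑ l, (Complex.normSq (star (v k) ⬝ᵥ v l) : ℂ) := by
  simp only [sum_mul, mul_sum, trace_sum, trace_pureState_mul_pureState]
  exact sum_comm

lemma sum_re_trace_pureState_mul_self_le [Fintype ι] (v : ι → n → ℂ) :
    ∑ k, (pureState (v k) * pureState (v k)).trace.re
      ≤ ((∑ k, pureState (v k)) * ∑ k, pureState (v k)).trace.re := by
  simp only [trace_sum_pureState_mul_sum_pureState, trace_pureState_mul_pureState,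
    Complex.re_sum, Complex.ofReal_re]
  exact sum_le_sum fun k _ =>
    single_le_sum (f := fun l => Complex.normSq (star (v k) ⬝ᵥ v l))
      (fun l _ => Complex.normSq_nonneg _) (mem_univ k)

lemma trace_sum_pureState_mul_sum_pureState_of_orthogonal [Fintype ι] {v : ι → n → ℂ}
    (hv : ∀ k l, k ≠ l → star (v k) ⬝ᵥ v l = 0) :
    ((∑ k, pureState (v k)) * ∑ k, pureState (v k)).trace
      = ∑ k, (pureState (v k) * pureState (v k)).trace := by
  rw [trace_sum_pureState_mul_sum_pureState]
  refine sum_congr rfl fun k _ => ?_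
  rw [trace_pureState_mul_pureState,
    sum_eq_single k (fun l _ hlk => by rw [hv k l (Ne.symm hlk), map_zero, Complex.ofReal_zero])
      (fun h => absurd (mem_univ k) h)]

lemma trace_sq_pureState_sub_sum_kronecker [Fintype ι] [DecidableEq ι] {ψ : m × n → ℂ}
    (hψ : ∑ i, Complex.normSq (ψ i) = 1) {e : ι → n → ℂ} (he : IsOrthonormalFamily e)
    (M : ι → Matrix m m ℂ) :
    ((pureState ψ - ∑ k, M k ⊗ₖ pureState (e k))
        * (pureState ψ - ∑ k, M k ⊗ₖ pureState (e k))).trace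
      = 1 - ∑ k, (pureState (partialInner ψ (e k)) * pureState (partialInner ψ (e k))).trace
        + ∑ k, ((M k - pureState (partialInner ψ (e k)))
            * (M k - pureState (partialInner ψ (e k)))).trace := by
  have hcross : (pureState ψ * ∑ k, M k ⊗ₖ pureState (e k)).trace
      = ∑ k, (pureState (partialInner ψ (e k)) * M k).trace := by
    simp only [mul_sum, trace_sum, trace_pureState_mul_kronecker_pureState]
  have hsq : ((∑ k, M k ⊗ₖ pureState (e k)) * ∑ k, M k ⊗ₖ pureState (e k)).trace
      = ∑ k, (M k * M k).trace := by
    simp only [sum_mul, mul_sum, trace_sum, trace_kronecker_pureState_mul he, sum_ite_eq',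
      mem_univ, if_true]
  rw [trace_sub_mul_sub, trace_pureState_mul_self_eq_one hψ, hcross, hsq]
  simp only [trace_sub_mul_sub (M _), trace_mul_comm (M _), sum_add_distrib, sum_sub_distrib,
    ← mul_sum]
  ring

end Bipartite

section TwoQudit

variable {d₁ d₂ : ℕ}

lemma sum_pureState_partialInner {e : Fin d₂ → Fin d₂ → ℂ} (he : IsOrthonormalFamily e)
    (ψ : Fin d₁ × Fin d₂ → ℂ) :
    ∑ k, pureState (partialInner ψ (e k)) = ptrace2 (pureState ψ) := by
  ext i i'
  have hsum : ∀ j j', ∑ k, star (e k j) * e k j' = if j' = j then 1 else 0 := fun j j' => by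
    simpa only [mul_comm] using he.sum_mul_star j' j
  simp only [Matrix.sum_apply, pureState, vecMulVec_apply, partialInner, Pi.star_apply, star_sum,
    star_mul', star_star, sum_mul, mul_sum, ptrace2, of_apply]
  rw [sum_comm]
  refine sum_congr rfl fun j' _ => ?_
  calc _ = ∑ j, ψ (i, j) * star (ψ (i', j')) * ∑ k, star (e k j) * e k j' := by
        rw [sum_comm]
        refine sum_congr rfl fun j _ => ?_
        rw [mul_sum]
        exact sum_congr rfl fun k _ => by ring
    _ = _ := by simp only [hsum, mul_ite, mul_one, mul_zero, sum_ite_eq, mem_univ, if_true]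

lemma star_partialInner_dotProduct (ψ : Fin d₁ × Fin d₂ → ℂ) (a b : Fin d₂ → ℂ) :
    star (partialInner ψ a) ⬝ᵥ partialInner ψ b = star b ⬝ᵥ (ptrace1 (pureState ψ) *ᵥ a) := by
  simp only [dotProduct, mulVec, partialInner, ptrace1, pureState, vecMulVec_apply, of_apply,
    Pi.star_apply, star_sum, star_mul', star_star, sum_mul, mul_sum]
  rw [sum_comm]
  refine sum_congr rfl fun j' _ => ?_
  rw [sum_comm]
  exact sum_congr rfl fun j _ => sum_congr rfl fun i _ => by ring

lemma ptrace1_pureState_isHermitian (ψ : Fin d₁ × Fin d₂ → ℂ) :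
    (ptrace1 (pureState ψ)).IsHermitian := by
  ext j j'
  simp only [ptrace1, conjTranspose_apply, of_apply, pureState, vecMulVec_apply, Pi.star_apply,
    star_sum, star_mul', star_star]
  exact sum_congr rfl fun i _ => mul_comm _ _

lemma exists_isOrthonormalFamily_partialInner_orthogonal (ψ : Fin d₁ × Fin d₂ → ℂ) :
    ∃ e : Fin d₂ → Fin d₂ → ℂ, IsOrthonormalFamily e ∧
      ∀ k l, k ≠ l → star (partialInner ψ (e k)) ⬝ᵥ partialInner ψ (e l) = 0 := by
  have hH := ptrace1_pureState_isHermitian ψ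
  let e : Fin d₂ → Fin d₂ → ℂ := fun k => hH.eigenvectorBasis k
  have he : IsOrthonormalFamily e := fun k l => by
    simpa [e, EuclideanSpace.inner_eq_star_dotProduct, dotProduct, mul_comm] using
      orthonormal_iff_ite.mp hH.eigenvectorBasis.orthonormal k l
  refine ⟨e, he, fun k l hkl => ?_⟩
  have hlk : star (e l) ⬝ᵥ e k = 0 := by simpa [Ne.symm hkl, dotProduct] using he l k
  rw [star_partialInner_dotProduct, hH.mulVec_eigenvectorBasis, dotProduct_smul, hlk, smul_zero]

lemma trace_ptrace2 (ρ : Matrix (Fin d₁ × Fin d₂) (Fin d₁ × Fin d₂) ℂ) :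
    (ptrace2 ρ).trace = ρ.trace := by
  simp [ptrace2, trace, Fintype.sum_prod_type]

lemma IsQCState.posSemidef {χ : Matrix (Fin d₁ × Fin d₂) (Fin d₁ × Fin d₂) ℂ}
    (hχ : IsQCState χ) : χ.PosSemidef := by
  obtain ⟨α, σ, e, hα, -, hσ, -, rfl⟩ := hχ
  refine posSemidef_sum _ fun k _ => ?_
  rw [← smul_kronecker]
  exact ((hσ k).1.smul (Complex.zero_le_real.mpr (hα k))).kronecker (pureState_posSemidef _)

lemma Dg_nonneg {ρ : Matrix (Fin d₁ × Fin d₂) (Fin d₁ × Fin d₂) ℂ} (hρ : ρ.IsHermitian) :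
    0 ≤ Dg ρ :=
  Real.sInf_nonneg <| by
    rintro x ⟨χ, hχ, rfl⟩
    exact re_trace_mul_self_nonneg (hρ.sub hχ.posSemidef.isHermitian)

lemma isQCState_sum_kronecker {M : Fin d₂ → Matrix (Fin d₁) (Fin d₁) ℂ}
    (hM : ∀ k, (M k).PosSemidef) (htr : (∑ k, M k).trace = 1) {e : Fin d₂ → Fin d₂ → ℂ}
    (he : IsOrthonormalFamily e) : IsQCState (∑ k, M k ⊗ₖ pureState (e k)) := by
  set α : Fin d₂ → ℝ := fun k => (M k).trace.re
  have hα : ∀ k, ((α k : ℝ) : ℂ) = (M k).trace := fun k =>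
    (Complex.eq_re_of_ofReal_le (by rw [Complex.ofReal_zero]; exact (hM k).trace_nonneg)).symm
  -- when `α k = 0` any state will do, and `∑ l, M l` is one
  let σ : Fin d₂ → Matrix (Fin d₁) (Fin d₁) ℂ := fun k =>
    if α k = 0 then ∑ l, M l else (((α k)⁻¹ : ℝ) : ℂ) • M k
  have hασ : ∀ k, (α k : ℂ) • σ k = M k := fun k => by
    by_cases hk : α k = 0
    · have : M k = 0 := (hM k).trace_eq_zero_iff.mp (by rw [← hα, hk, Complex.ofReal_zero])
      simp [hk, this]
    · simp only [σ, if_neg hk, smul_smul, ← Complex.ofReal_mul, mul_inv_cancel₀ hk,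
        Complex.ofReal_one, one_smul]
  refine ⟨α, σ, e, fun k => ?_, ?_, fun k => ?_, he, ?_⟩
  · exact (Complex.nonneg_iff.mp (hM k).trace_nonneg).1
  · simpa [trace_sum] using congrArg Complex.re htr
  · by_cases hk : α k = 0
    · simp only [σ, if_pos hk]
      exact ⟨posSemidef_sum _ fun l _ => hM l, htr⟩
    · simp only [σ, if_neg hk]
      refine ⟨(hM k).smul (Complex.zero_le_real.mpr (inv_nonneg.mpr ?_)), ?_⟩
      · exact (Complex.nonneg_iff.mp (hM k).trace_nonneg).1
      · rw [trace_smul, ← hα, smul_eq_mul, ← Complex.ofReal_mul, inv_mul_cancel₀ hk,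
          Complex.ofReal_one]
  · simp only [← smul_kronecker, hασ]

lemma le_re_trace_sq_sub_of_isQCState {ψ : Fin d₁ × Fin d₂ → ℂ}
    (hψ : ∑ i, Complex.normSq (ψ i) = 1) {χ : Matrix (Fin d₁ × Fin d₂) (Fin d₁ × Fin d₂) ℂ}
    (hχ : IsQCState χ) :
    1 - ((ptrace2 (pureState ψ) * ptrace2 (pureState ψ)).trace).re
      ≤ (((pureState ψ - χ) * (pureState ψ - χ)).trace).re := by
  obtain ⟨α, σ, e, hα, -, hσ, he, rfl⟩ := hχ
  have hM : ∀ k, ((α k : ℂ) • σ k).IsHermitian := fun k =>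
    ((hσ k).1.smul (Complex.zero_le_real.mpr (hα k))).isHermitian
  simp only [← smul_kronecker]
  rw [trace_sq_pureState_sub_sum_kronecker hψ he, ← sum_pureState_partialInner he ψ]
  simp only [Complex.add_re, Complex.sub_re, Complex.one_re, Complex.re_sum]
  have hdist := sum_nonneg fun k (_ : k ∈ univ) =>
    re_trace_mul_self_nonneg ((hM k).sub (pureState_posSemidef (partialInner ψ (e k))).isHermitian)
  linarith [sum_re_trace_pureState_mul_self_le fun k => partialInner ψ (e k)]

lemma exists_isQCState_re_trace_sq_sub_eq {ψ : Fin d₁ × Fin d₂ → ℂ}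
    (hψ : ∑ i, Complex.normSq (ψ i) = 1) :
    ∃ χ, IsQCState χ ∧ (((pureState ψ - χ) * (pureState ψ - χ)).trace).re
      = 1 - ((ptrace2 (pureState ψ) * ptrace2 (pureState ψ)).trace).re := by
  obtain ⟨e, he, horth⟩ := exists_isOrthonormalFamily_partialInner_orthogonal ψ
  have hsum := sum_pureState_partialInner he ψ
  refine ⟨∑ k, pureState (partialInner ψ (e k)) ⊗ₖ pureState (e k),
    isQCState_sum_kronecker (fun k => pureState_posSemidef _) ?_ he, ?_⟩
  · rw [hsum, trace_ptrace2, trace_pureState, hψ, Complex.ofReal_one]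
  · rw [trace_sq_pureState_sub_sum_kronecker hψ he, ← hsum,
      trace_sum_pureState_mul_sum_pureState_of_orthogonal horth]
    simp

theorem Dg_pureState {ψ : Fin d₁ × Fin d₂ → ℂ} (hψ : ∑ i, Complex.normSq (ψ i) = 1) :
    Dg (pureState ψ) = 1 - ((ptrace2 (pureState ψ) * ptrace2 (pureState ψ)).trace).re := by
  obtain ⟨χ, hχ, hval⟩ := exists_isQCState_re_trace_sq_sub_eq hψ
  refine IsLeast.csInf_eq ⟨⟨χ, hχ, hval.symm⟩, ?_⟩
  rintro x ⟨χ', hχ', rfl⟩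
  exact le_re_trace_sq_sub_of_isQCState hψ hχ'

end TwoQudit

/-- for any pure two-qubit state `|ψ⟩⟨ψ|` on `ℂ²⊗ℂ²`,
`D_g(|ψ⟩⟨ψ|) = (1/2) C²`, where `C = √(2(1 - tr[ρ₁²]))` and `ρ₁ = tr₂ ρ`. -/
theorem stmt4 (ψ : Fin 2 × Fin 2 → ℂ) (hψ : ∑ i, Complex.normSq (ψ i) = 1) :
    Dg (pureState ψ) = 2⁻¹ * concurrence (pureState ψ) ^ 2 := by
  have hDg := Dg_pureState hψ
  have hDg_nonneg := Dg_nonneg (pureState_posSemidef ψ).isHermitian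
  rw [concurrence, Real.sq_sqrt (by linarith)]
  linarith
end

section
/- For every two-qudit state ρ on ℂ^d⊗ℂ^d (d ≥ 2), pure or mixed, and any Bloch bases Υ₁, Υ₂, the spectral (operator) norm of the correlation matrix of ρ satisfies ‖T_ρ‖₀ := sup_{‖n‖=1} ‖T_ρ n‖ ≤ 2(d−1)/d. -/
open Matrix Finset
open scoped Kronecker ComplexOrder

/-!
For unit vectors `m`, `n` the bilinear form `m ⬝ T n` equals `Re tr[ρ (A ⊗ B)]` with
`A = Σ mᵢ Υ₁ᵢ` and `B = Σ nⱼ Υ₂ⱼ`, and `‖T n‖` is its maximum over `m`. The matrices `A`, `B` are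
Hermitian and traceless with `tr A² = tr B² = 2`, so their eigenvalues are `d` reals summing to
zero with square sum `2`; Cauchy–Schwarz on the other `d - 1` of them bounds the square of each by
`2(d-1)/d`, i.e. `-c ≤ A, B ≤ c` for `c = √(2(d-1)/d)`. Then
`c² - A ⊗ B = ½ [(c - A) ⊗ (c + B) + (c + A) ⊗ (c - B)] ≥ 0`, and pairing with the state `ρ`
gives `m ⬝ T n ≤ c² = 2(d-1)/d`.
-/

theorem card_mul_sq_le_of_sum_eq_zero {ι : Type*} [Fintype ι] [DecidableEq ι] {x : ι → ℝ}
    (hx : ∑ i, x i = 0) (k : ι) :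
    Fintype.card ι * x k ^ 2 ≤ (Fintype.card ι - 1) * ∑ i, x i ^ 2 := by
  have hcard : ((univ.erase k).card : ℝ) = Fintype.card ι - 1 := by
    rw [card_erase_of_mem (mem_univ k), card_univ, Nat.cast_pred (Fintype.card_pos_iff.mpr ⟨k⟩)]
  have hrest : ∑ i ∈ univ.erase k, x i = -x k := by
    linarith [add_sum_erase univ x (mem_univ k)]
  have hcs := sq_sum_le_card_mul_sum_sq (s := univ.erase k) (f := x)
  rw [hrest, neg_sq, hcard] at hcs
  rw [← add_sum_erase univ (fun i => x i ^ 2) (mem_univ k)]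
  linarith

theorem sqrt_sum_sq_le_of_forall_dotProduct_le {ι : Type*} [Fintype ι] {v : ι → ℝ} {K : ℝ}
    (hK : 0 ≤ K) (h : ∀ m : ι → ℝ, ∑ i, m i ^ 2 = 1 → m ⬝ᵥ v ≤ K) :
    √(∑ i, v i ^ 2) ≤ K := by
  rcases (Real.sqrt_nonneg (∑ i, v i ^ 2)).eq_or_lt with hr | hr
  · rw [← hr]; exact hK
  set r := √(∑ i, v i ^ 2)
  have hr2 : r ^ 2 = ∑ i, v i ^ 2 := Real.sq_sqrt (by positivity)
  have hunit : ∑ i, (v i / r) ^ 2 = 1 := by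
    simp_rw [div_pow, ← sum_div, ← hr2]
    exact div_self (by positivity)
  calc r = (fun i => v i / r) ⬝ᵥ v := by
        simp_rw [dotProduct, div_mul_eq_mul_div, ← sum_div, ← sq, ← hr2]
        field_simp
    _ ≤ K := h _ hunit

theorem two_mul_sub_one_div_nonneg (d : ℕ) : 0 ≤ 2 * ((d : ℝ) - 1) / d := by
  rcases Nat.eq_zero_or_pos d with rfl | hd
  · simp
  · have : (1 : ℝ) ≤ d := by exact_mod_cast hd
    exact div_nonneg (by linarith) (by positivity)

namespace Matrix

variable {n 𝕜 : Type*} [RCLike 𝕜] [DecidableEq n]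

theorem smul_one_sub_kronecker_add_smul_one_add_kronecker {m : Type*} [DecidableEq m]
    (c : ℝ) (A : Matrix n n 𝕜) (B : Matrix m m 𝕜) :
    (c • 1 - A) ⊗ₖ (c • 1 + B) + (c • 1 + A) ⊗ₖ (c • 1 - B) = (2 : ℝ) • (c ^ 2 • 1 - A ⊗ₖ B) := by
  ext ⟨i, j⟩ ⟨k, l⟩
  by_cases hik : i = k <;> by_cases hjl : j = l <;>
    simp [hik, hjl, RCLike.real_smul_eq_coe_mul, RCLike.ofReal_ofNat] <;> ring

variable [Fintype n]

theorem IsHermitian.trace_mul_self {A : Matrix n n 𝕜} (hA : A.IsHermitian) :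
    (A * A).trace = ∑ i, ((hA.eigenvalues i ^ 2 : ℝ) : 𝕜) := by
  rw [← sq, ← cfc_pow_id (R := ℝ) A 2 hA.isSelfAdjoint, hA.cfc_eq, IsHermitian.cfc,
    Unitary.conjStarAlgAut_apply, trace_mul_cycle, Unitary.coe_star_mul_self, one_mul,
    trace_diagonal]
  rfl

theorem IsHermitian.card_mul_sq_eigenvalues_le {A : Matrix n n 𝕜} (hA : A.IsHermitian)
    (h0 : A.trace = 0) (i : n) :
    Fintype.card n * hA.eigenvalues i ^ 2 ≤ (Fintype.card n - 1) * RCLike.re (A * A).trace := by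
  have hsum : ∑ j, hA.eigenvalues j = 0 := by
    have := hA.trace_eq_sum_eigenvalues
    rw [h0, ← RCLike.ofReal_sum] at this
    exact_mod_cast this.symm
  rw [hA.trace_mul_self, ← RCLike.ofReal_sum, RCLike.ofReal_re]
  exact card_mul_sq_le_of_sum_eq_zero hsum i

open scoped MatrixOrder in
theorem IsHermitian.posSemidef_smul_one_sub {A : Matrix n n 𝕜} (hA : A.IsHermitian) {c : ℝ}
    (hc : ∀ i, hA.eigenvalues i ≤ c) : (c • 1 - A).PosSemidef := by
  have hle : A ≤ algebraMap ℝ (Matrix n n 𝕜) c := by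
    refine le_algebraMap_of_spectrum_le ?_ hA.isSelfAdjoint
    rw [hA.spectrum_real_eq_range_eigenvalues]
    rintro _ ⟨i, rfl⟩
    exact hc i
  rwa [Matrix.le_iff, Algebra.algebraMap_eq_smul_one] at hle

theorem IsHermitian.posSemidef_smul_one_sub_of_trace_eq_zero {A : Matrix n n 𝕜}
    (hA : A.IsHermitian) (h0 : A.trace = 0) {c : ℝ} (hc : 0 ≤ c)
    (hA2 : (Fintype.card n - 1) * RCLike.re (A * A).trace ≤ Fintype.card n * c ^ 2) :
    (c • 1 - A).PosSemidef := by
  refine hA.posSemidef_smul_one_sub fun i => abs_le_of_sq_le_sq' ?_ hc |>.2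
  have hcard : (0 : ℝ) < Fintype.card n := by
    exact_mod_cast Fintype.card_pos_iff.mpr ⟨i⟩
  have := hA.card_mul_sq_eigenvalues_le h0 i
  exact le_of_mul_le_mul_left (by linarith) hcard

theorem IsHermitian.posSemidef_smul_one_add_of_trace_eq_zero {A : Matrix n n 𝕜}
    (hA : A.IsHermitian) (h0 : A.trace = 0) {c : ℝ} (hc : 0 ≤ c)
    (hA2 : (Fintype.card n - 1) * RCLike.re (A * A).trace ≤ Fintype.card n * c ^ 2) :
    (c • 1 + A).PosSemidef := by
  rw [← sub_neg_eq_add]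
  exact hA.neg.posSemidef_smul_one_sub_of_trace_eq_zero (by rw [trace_neg, h0, neg_zero]) hc
    (by rwa [neg_mul_neg])

theorem PosSemidef.smul_one_sub_kronecker {m : Type*} [Fintype m] [DecidableEq m] {c : ℝ}
    {A : Matrix n n 𝕜} {B : Matrix m m 𝕜}
    (hA₁ : (c • 1 - A).PosSemidef) (hA₂ : (c • 1 + A).PosSemidef)
    (hB₁ : (c • 1 - B).PosSemidef) (hB₂ : (c • 1 + B).PosSemidef) :
    (c ^ 2 • 1 - A ⊗ₖ B).PosSemidef := by
  have h := (hA₁.kronecker hB₂).add (hA₂.kronecker hB₁)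
  rw [smul_one_sub_kronecker_add_smul_one_add_kronecker] at h
  simpa using h.smul (a := (2 : ℝ)⁻¹) (by norm_num)

open scoped MatrixOrder in
theorem PosSemidef.re_trace_mul_nonneg {A B : Matrix n n 𝕜} (hA : A.PosSemidef)
    (hB : B.PosSemidef) : 0 ≤ RCLike.re (A * B).trace := by
  obtain ⟨C, rfl⟩ := CStarAlgebra.nonneg_iff_eq_star_mul_self.mp hA.nonneg
  rw [mul_assoc, trace_mul_comm, star_eq_conjTranspose]
  exact RCLike.nonneg_iff.mp (hB.mul_mul_conjTranspose_same C).trace_nonneg |>.1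

end Matrix

theorem IsState.re_trace_mul_kronecker_le {n m : Type*} [Fintype n] [DecidableEq n] [Fintype m]
    [DecidableEq m] {ρ : Matrix (n × m) (n × m) ℂ} (hρ : IsState ρ) {c : ℝ}
    {A : Matrix n n ℂ} {B : Matrix m m ℂ}
    (hA₁ : (c • 1 - A).PosSemidef) (hA₂ : (c • 1 + A).PosSemidef)
    (hB₁ : (c • 1 - B).PosSemidef) (hB₂ : (c • 1 + B).PosSemidef) :
    (ρ * (A ⊗ₖ B)).trace.re ≤ c ^ 2 := by
  have h := hρ.1.re_trace_mul_nonneg (hA₁.smul_one_sub_kronecker hA₂ hB₁ hB₂)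
  rw [Matrix.mul_sub, Matrix.mul_smul, Matrix.mul_one, trace_sub, trace_smul, hρ.2] at h
  simpa [← Complex.ofReal_pow] using h

namespace IsBlochBasis

variable {d : ℕ} {Υ : Fin (d ^ 2 - 1) → Matrix (Fin d) (Fin d) ℂ}

theorem isHermitian_sum_smul (hΥ : IsBlochBasis d Υ) (w : Fin (d ^ 2 - 1) → ℝ) :
    (∑ i, w i • Υ i).IsHermitian :=
  isSelfAdjoint_sum _ fun i _ => (hΥ.2.1 i).smul (IsSelfAdjoint.all (w i))

theorem trace_sum_smul (hΥ : IsBlochBasis d Υ) (w : Fin (d ^ 2 - 1) → ℝ) :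
    (∑ i, w i • Υ i).trace = 0 := by
  simp [trace_sum, trace_smul, hΥ.2.2.1]

theorem trace_sum_smul_mul_self (hΥ : IsBlochBasis d Υ) (w : Fin (d ^ 2 - 1) → ℝ) :
    ((∑ i, w i • Υ i) * (∑ i, w i • Υ i)).trace = ((2 * ∑ i, w i ^ 2 : ℝ) : ℂ) := by
  simp [sum_mul, mul_sum, trace_sum, trace_smul, hΥ.2.2.2, sq, mul_comm, mul_assoc]

theorem posSemidef_sqrt_smul_one_sub_and_add_sum_smul (hΥ : IsBlochBasis d Υ)
    {w : Fin (d ^ 2 - 1) → ℝ} (hw : ∑ i, w i ^ 2 = 1) :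
    (√(2 * ((d : ℝ) - 1) / d) • 1 - ∑ i, w i • Υ i).PosSemidef ∧
      (√(2 * ((d : ℝ) - 1) / d) • 1 + ∑ i, w i • Υ i).PosSemidef := by
  have hbound : (Fintype.card (Fin d) - 1) * RCLike.re ((∑ i, w i • Υ i) * ∑ i, w i • Υ i).trace
      ≤ Fintype.card (Fin d) * √(2 * ((d : ℝ) - 1) / d) ^ 2 := by
    rw [Fintype.card_fin, hΥ.trace_sum_smul_mul_self, hw, RCLike.re_to_complex,
      Complex.ofReal_re, Real.sq_sqrt (two_mul_sub_one_div_nonneg d)]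
    rcases Nat.eq_zero_or_pos d with rfl | hd
    · norm_num
    · rw [mul_div_cancel₀ _ (by positivity)]
      linarith
  have hA := hΥ.isHermitian_sum_smul w
  exact ⟨hA.posSemidef_smul_one_sub_of_trace_eq_zero (hΥ.trace_sum_smul w)
      (Real.sqrt_nonneg _) hbound,
    hA.posSemidef_smul_one_add_of_trace_eq_zero (hΥ.trace_sum_smul w)
      (Real.sqrt_nonneg _) hbound⟩

end IsBlochBasis

theorem sum_smul_kronecker_sum_smul {ι κ l m : Type*} [Fintype ι] [Fintype κ]
    (a : ι → ℝ) (b : κ → ℝ) (A : ι → Matrix l l ℂ) (B : κ → Matrix m m ℂ) :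
    (∑ i, a i • A i) ⊗ₖ (∑ j, b j • B j) = ∑ i, ∑ j, (a i * b j) • (A i ⊗ₖ B j) := by
  ext
  simp [Matrix.sum_apply, kroneckerMap_apply, sum_mul_sum, Complex.real_smul, mul_mul_mul_comm]

theorem dotProduct_corrMatrix_mulVec {d₁ d₂ : ℕ}
    (ρ : Matrix (Fin d₁ × Fin d₂) (Fin d₁ × Fin d₂) ℂ)
    (Υ₁ : Fin (d₁ ^ 2 - 1) → Matrix (Fin d₁) (Fin d₁) ℂ)
    (Υ₂ : Fin (d₂ ^ 2 - 1) → Matrix (Fin d₂) (Fin d₂) ℂ)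
    (a : Fin (d₁ ^ 2 - 1) → ℝ) (b : Fin (d₂ ^ 2 - 1) → ℝ) :
    a ⬝ᵥ (corrMatrix ρ Υ₁ Υ₂ *ᵥ b) = (ρ * ((∑ i, a i • Υ₁ i) ⊗ₖ (∑ j, b j • Υ₂ j))).trace.re := by
  simp [sum_smul_kronecker_sum_smul, mul_sum, trace_sum, trace_smul, dotProduct, mulVec,
    corrMatrix, mul_comm, mul_assoc]

theorem stmt19_general {d : ℕ}
    (ρ : Matrix (Fin d × Fin d) (Fin d × Fin d) ℂ) (hρ : IsState ρ)
    (Υ₁ : Fin (d ^ 2 - 1) → Matrix (Fin d) (Fin d) ℂ) (hΥ₁ : IsBlochBasis d Υ₁)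
    (Υ₂ : Fin (d ^ 2 - 1) → Matrix (Fin d) (Fin d) ℂ) (hΥ₂ : IsBlochBasis d Υ₂) :
    ∀ n : Fin (d ^ 2 - 1) → ℝ, (∑ i, n i ^ 2 = 1) →
      Real.sqrt (∑ j, ((corrMatrix ρ Υ₁ Υ₂).mulVec n j) ^ 2) ≤ 2 * ((d : ℝ) - 1) / d := by
  intro n hn
  refine sqrt_sum_sq_le_of_forall_dotProduct_le (two_mul_sub_one_div_nonneg d) fun m hm => ?_
  obtain ⟨hA₁, hA₂⟩ := hΥ₁.posSemidef_sqrt_smul_one_sub_and_add_sum_smul hm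
  obtain ⟨hB₁, hB₂⟩ := hΥ₂.posSemidef_sqrt_smul_one_sub_and_add_sum_smul hn
  calc m ⬝ᵥ (corrMatrix ρ Υ₁ Υ₂ *ᵥ n)
      ≤ √(2 * ((d : ℝ) - 1) / d) ^ 2 := by
        rw [dotProduct_corrMatrix_mulVec]
        exact hρ.re_trace_mul_kronecker_le hA₁ hA₂ hB₁ hB₂
    _ = 2 * ((d : ℝ) - 1) / d := Real.sq_sqrt (two_mul_sub_one_div_nonneg d)

/-- for every two-qudit state `ρ` on `ℂ^d⊗ℂ^d`, the spectral norm of the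
correlation matrix satisfies `‖T_ρ‖₀ = sup_{‖n‖=1} ‖T_ρ n‖ ≤ 2(d-1)/d`. -/
theorem stmt19 {d : ℕ} (hd : 2 ≤ d)
    (ρ : Matrix (Fin d × Fin d) (Fin d × Fin d) ℂ) (hρ : IsState ρ)
    (Υ₁ : Fin (d ^ 2 - 1) → Matrix (Fin d) (Fin d) ℂ) (hΥ₁ : IsBlochBasis d Υ₁)
    (Υ₂ : Fin (d ^ 2 - 1) → Matrix (Fin d) (Fin d) ℂ) (hΥ₂ : IsBlochBasis d Υ₂) :
    ∀ n : Fin (d ^ 2 - 1) → ℝ, (∑ i, n i ^ 2 = 1) →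
      Real.sqrt (∑ j, ((corrMatrix ρ Υ₁ Υ₂).mulVec n j) ^ 2) ≤ 2 * ((d : ℝ) - 1) / d :=
  stmt19_general ρ hρ Υ₁ hΥ₁ Υ₂ hΥ₂
end
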